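/- Let G be the setwise stabilizer of F5 in GL(6,3) (under the row action on lines W ↦ {v·g : v ∈ W}), i.e., G = {g ∈ GL(6,3) : g permutes the five lines of F5 among themselves}. Then G has order 240, the kernel of the induced permutation action of G on the five lines of F5 consists exactly of the two scalar matrices {1, −1}, and the image of this permutation action is the full symmetric group on the five lines of F5 (of order 120); in particular the projective setwise stabilizer of F5 is isomorphic to S₅. -/

import Mathlib

open Matrix

abbrev F3 := ZMod 3
abbrev V6 := Fin 6 → F3

/-- The line (2-dim subspace) represented by a 2×6 matrix: the span of its rows. -/
def lineOf (A : Matrix (Fin 2) (Fin 6) F3) : Submodule F3 V6 :=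
  Submodule.span F3 (Set.range A)

/-- The perp of a subspace `W` with respect to a 6×6 Gram matrix `M`:
`{x | xᵀ M w = 0 for all w ∈ W}`. -/
def perp (M : Matrix (Fin 6) (Fin 6) F3) (W : Submodule F3 V6) : Submodule F3 V6 where
  carrier := {x | ∀ w ∈ W, x ⬝ᵥ M.mulVec w = 0}
  add_mem' := by
    intro a b ha hb w hw
    simp only [Set.mem_setOf_eq] at *
    rw [add_dotProduct, ha w hw, hb w hw, add_zero]
  zero_mem' := by
    intro w hw
    exact zero_dotProduct _
  smul_mem' := by
    intro c x hx w hw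
    simp only [Set.mem_setOf_eq] at *
    rw [smul_dotProduct, hx w hw, smul_zero]

/-- A 2×6 matrix built from three 2×2 blocks. -/
def blk3 (A B C : Matrix (Fin 2) (Fin 2) F3) : Matrix (Fin 2) (Fin 6) F3 :=
  Matrix.of fun i j => ![A, B, C] ⟨(j : ℕ) / 2, by omega⟩ i ⟨(j : ℕ) % 2, by omega⟩

/-- A 6×6 matrix built from nine 2×2 blocks. -/
def blk33 (M : Matrix (Fin 3) (Fin 3) (Matrix (Fin 2) (Fin 2) F3)) :
    Matrix (Fin 6) (Fin 6) F3 :=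
  Matrix.of fun i j =>
    M ⟨(i : ℕ) / 2, by omega⟩ ⟨(j : ℕ) / 2, by omega⟩ ⟨(i : ℕ) % 2, by omega⟩ ⟨(j : ℕ) % 2, by omega⟩

/-- The 2×2 block of a 6×6 matrix in block-position `(i, j)`. -/
def blkAt (M : Matrix (Fin 6) (Fin 6) F3) (i j : Fin 3) : Matrix (Fin 2) (Fin 2) F3 :=
  Matrix.of fun a b => M ⟨2 * (i : ℕ) + (a : ℕ), by omega⟩ ⟨2 * (j : ℕ) + (b : ℕ), by omega⟩

/-- Two (not necessarily distinct) lines are opposite w.r.t. `M` if `ℓ ∩ m^⊥ = 0`. -/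
def Opp (M : Matrix (Fin 6) (Fin 6) F3) (ℓ m : Submodule F3 V6) : Prop :=
  ℓ ⊓ perp M m = ⊥

/-- The set `F5` of five lines: `F4` together with the line of `(I R S)` where
`R = [[2,0],[2,2]]` and `S = [[2,2],[0,2]]`. -/
def F5 : Set (Submodule F3 V6) :=
  {lineOf (blk3 1 0 0), lineOf (blk3 0 1 0), lineOf (blk3 0 0 1), lineOf (blk3 1 1 1),
   lineOf (blk3 1 !![2, 0; 2, 2] !![2, 2; 0, 2])}

/-!
Each `g` in the stabilizer permutes the five lines. If `g` fixes all of them, fixing the three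
coordinate lines makes `g` block diagonal `diag(A, B, C)`, fixing `(I I I)` gives `A = B = C`,
and fixing `(I R S)` gives that `A` commutes with `R` and `S`; over `GF(3)` this forces `A` to be
scalar, so `g = ±1`. Conversely, two explicit matrices induce the 5-cycle `(0 1 2 3 4)` and the
transposition `(0 1)` on the lines, and these generate `S₅` because `5` is prime. The first
isomorphism theorem then gives `|G| = 2 · 5! = 240`.
-/

section RowAction

variable {n K : Type*} [Fintype n] [CommRing K]

lemma Submodule.map_vecMulLinear_mul (W : Submodule K (n → K)) (A B : Matrix n n K) :
    W.map (A * B).vecMulLinear = (W.map A.vecMulLinear).map B.vecMulLinear := by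
  rw [← map_comp]
  exact congrArg (map · W) (LinearMap.ext fun v => (vecMul_vecMul v A B).symm)

variable [DecidableEq n]

namespace Submodule

lemma map_vecMulLinear_one (W : Submodule K (n → K)) :
    W.map (1 : Matrix n n K).vecMulLinear = W := by
  rw [show (1 : Matrix n n K).vecMulLinear = LinearMap.id from LinearMap.ext vecMul_one, map_id]

lemma map_vecMulLinear_neg_one (W : Submodule K (n → K)) :
    W.map (-1 : Matrix n n K).vecMulLinear = W := by
  rw [show (-1 : Matrix n n K).vecMulLinear = -(1 : Matrix n n K).vecMulLinear from
    LinearMap.ext fun v => vecMul_neg v 1, Submodule.map_neg, map_vecMulLinear_one]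

lemma map_vecMulLinear_val_inv (W : Submodule K (n → K)) (g : GL n K) :
    (W.map (g : Matrix n n K).vecMulLinear).map (↑g⁻¹ : Matrix n n K).vecMulLinear = W := by
  rw [← map_vecMulLinear_mul, ← Units.val_mul, mul_inv_cancel, Units.val_one,
    map_vecMulLinear_one]

lemma map_vecMulLinear_injective (g : GL n K) :
    Function.Injective (map (g : Matrix n n K).vecMulLinear) :=
  Function.LeftInverse.injective (map_vecMulLinear_val_inv · g)

end Submodule

open Submodule

def rowStabilizer (S : Set (Submodule K (n → K))) [Finite S] : Subgroup (GL n K) where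
  carrier := {g | ∀ ℓ ∈ S, ℓ.map (g : Matrix n n K).vecMulLinear ∈ S}
  one_mem' ℓ hℓ := by rwa [Units.val_one, map_vecMulLinear_one]
  mul_mem' {g h} hg hh ℓ hℓ := by
    rw [Units.val_mul, map_vecMulLinear_mul]
    exact hh _ (hg ℓ hℓ)
  inv_mem' {g} hg ℓ hℓ := by
    have hsurj : Function.Surjective fun m : S =>
        (⟨m.1.map (g : Matrix n n K).vecMulLinear, hg m m.2⟩ : S) :=
      Finite.injective_iff_surjective.mp fun a b hab =>
        Subtype.ext (map_vecMulLinear_injective g (congrArg Subtype.val hab))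
    obtain ⟨m, hm⟩ := hsurj ⟨ℓ, hℓ⟩
    have hm : m.1.map (g : Matrix n n K).vecMulLinear = ℓ := congrArg Subtype.val hm
    rw [← hm, map_vecMulLinear_val_inv]
    exact m.2

def rowFixer (S : Set (Submodule K (n → K))) : Subgroup (GL n K) where
  carrier := {g | ∀ ℓ ∈ S, ℓ.map (g : Matrix n n K).vecMulLinear = ℓ}
  one_mem' ℓ _ := by rw [Units.val_one, map_vecMulLinear_one]
  mul_mem' {g h} hg hh ℓ hℓ := by
    rw [Units.val_mul, map_vecMulLinear_mul, hg ℓ hℓ, hh ℓ hℓ]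
  inv_mem' {g} (hg : ∀ ℓ ∈ S, ℓ.map (g : Matrix n n K).vecMulLinear = ℓ) ℓ hℓ := by
    conv_lhs => rw [← hg ℓ hℓ]
    exact map_vecMulLinear_val_inv ℓ g

def rowRealizablePerms {ι : Type*} (L : ι → Submodule K (n → K)) :
    Subgroup (Equiv.Perm ι) where
  carrier := {τ | ∃ g : GL n K, ∀ i, (L i).map (g : Matrix n n K).vecMulLinear = L (τ i)}
  one_mem' := ⟨1, fun i => map_vecMulLinear_one (L i)⟩
  mul_mem' := by
    rintro σ τ ⟨g, hg⟩ ⟨h, hh⟩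
    refine ⟨h * g, fun i => ?_⟩
    rw [Units.val_mul, map_vecMulLinear_mul, hh, hg]
    rfl
  inv_mem' := by
    rintro τ ⟨g, hg⟩
    refine ⟨g⁻¹, fun i => ?_⟩
    conv_lhs => rw [← τ.apply_symm_apply i, ← hg]
    exact map_vecMulLinear_val_inv _ g

lemma exists_map_eq_of_rowRealizablePerms_eq_top {ι : Type*} {L : ι → Submodule K (n → K)}
    (hL : Function.Injective L) (htop : rowRealizablePerms L = ⊤)
    {S : Set (Submodule K (n → K))} (hS : S = Set.range L) (σ : Equiv.Perm S) :
    ∃ g : GL n K, ∀ ℓ : S, ℓ.1.map (g : Matrix n n K).vecMulLinear = σ ℓ := by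
  subst hS
  let e := Equiv.ofInjective L hL
  obtain ⟨g, hg⟩ : e.symm.permCongr σ ∈ rowRealizablePerms L := htop ▸ Subgroup.mem_top _
  refine ⟨g, fun ℓ => ?_⟩
  obtain ⟨i, rfl⟩ := e.surjective ℓ
  exact (hg i).trans (Equiv.apply_ofInjective_symm hL _)

variable {S : Set (Submodule K (n → K))} [Finite S]

lemma rowFixer_le_rowStabilizer : rowFixer S ≤ rowStabilizer S :=
  fun _ hg ℓ hℓ => (hg ℓ hℓ).symm ▸ hℓ

-- `v ↦ v ᵥ* g` is a right action, hence the opposite group.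
def rowStabilizer.toPerm : rowStabilizer S →* (Equiv.Perm S)ᵐᵒᵖ where
  toFun g := .op
    { toFun ℓ := ⟨ℓ.1.map (g.1 : Matrix n n K).vecMulLinear, g.2 ℓ ℓ.2⟩
      invFun ℓ := ⟨ℓ.1.map (g⁻¹.1 : Matrix n n K).vecMulLinear, g⁻¹.2 ℓ ℓ.2⟩
      left_inv ℓ := Subtype.ext (map_vecMulLinear_val_inv ℓ.1 g.1)
      right_inv ℓ := Subtype.ext (by simpa using map_vecMulLinear_val_inv ℓ.1 g.1⁻¹) }
  map_one' := by
    apply MulOpposite.unop_injective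
    ext ℓ : 2
    exact map_vecMulLinear_one ℓ.1
  map_mul' g h := by
    apply MulOpposite.unop_injective
    ext ℓ : 2
    exact map_vecMulLinear_mul ℓ.1 _ _

lemma rowStabilizer.ker_toPerm :
    (toPerm : rowStabilizer S →* _).ker = (rowFixer S).subgroupOf (rowStabilizer S) := by
  ext g
  rw [MonoidHom.mem_ker, Subgroup.mem_subgroupOf]
  constructor
  · intro h ℓ hℓ
    exact congrArg (fun σ : (Equiv.Perm S)ᵐᵒᵖ => (σ.unop ⟨ℓ, hℓ⟩).1) h
  · intro h
    apply MulOpposite.unop_injective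
    ext ℓ : 2
    exact h ℓ.1 ℓ.2

theorem card_rowStabilizer
    (h : ∀ σ : Equiv.Perm S, ∃ g : GL n K,
      ∀ ℓ : S, ℓ.1.map (g : Matrix n n K).vecMulLinear = σ ℓ) :
    Nat.card (rowStabilizer S) = Nat.card (rowFixer S) * (Nat.card S).factorial := by
  have hsurj : Function.Surjective (rowStabilizer.toPerm : rowStabilizer S →* _) := by
    intro σ
    obtain ⟨g, hg⟩ := h σ.unop
    refine ⟨⟨g, fun ℓ hℓ => hg ⟨ℓ, hℓ⟩ ▸ (σ.unop ⟨ℓ, hℓ⟩).2⟩, ?_⟩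
    apply MulOpposite.unop_injective
    ext ℓ : 2
    exact hg ℓ
  rw [← Subgroup.card_mul_index rowStabilizer.toPerm.ker, Subgroup.index_ker,
    MonoidHom.range_eq_top.mpr hsurj, Subgroup.card_top, Nat.card_congr MulOpposite.opEquiv.symm,
    Nat.card_perm, rowStabilizer.ker_toPerm,
    Nat.card_congr (Subgroup.subgroupOfEquivOfLe rowFixer_le_rowStabilizer).toEquiv]

end RowAction

lemma span_range_le_span_range_iff {m m' n K : Type*} [Fintype m'] [CommRing K]
    {M : Matrix m n K} {N : Matrix m' n K} :
    Submodule.span K (Set.range M) ≤ Submodule.span K (Set.range N) ↔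
      ∃ X : Matrix m m' K, X * N = M := by
  have hN : Submodule.span K (Set.range N) = LinearMap.range N.vecMulLinear :=
    (range_vecMulLinear N).symm
  rw [hN, Submodule.span_le]
  constructor
  · intro h
    choose X hX using fun i => h ⟨i, rfl⟩
    exact ⟨X, Matrix.ext fun i j => congrFun (hX i) j⟩
  · rintro ⟨X, rfl⟩ _ ⟨i, rfl⟩
    exact ⟨X i, rfl⟩

lemma mul_blk3 (X A B C : Matrix (Fin 2) (Fin 2) F3) :
    X * blk3 A B C = blk3 (X * A) (X * B) (X * C) := by
  ext i j
  fin_cases j <;> rfl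

lemma blk3_add (A B C A' B' C' : Matrix (Fin 2) (Fin 2) F3) :
    blk3 A B C + blk3 A' B' C' = blk3 (A + A') (B + B') (C + C') := by
  ext i j
  fin_cases j <;> rfl

lemma blk3_eq_add (A B C : Matrix (Fin 2) (Fin 2) F3) :
    blk3 A B C = A * blk3 1 0 0 + B * blk3 0 1 0 + C * blk3 0 0 1 := by
  simp only [mul_blk3, blk3_add, mul_one, mul_zero, add_zero, zero_add]

lemma blk3_injective {A B C A' B' C' : Matrix (Fin 2) (Fin 2) F3}
    (h : blk3 A B C = blk3 A' B' C') : A = A' ∧ B = B' ∧ C = C' := by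
  refine ⟨?_, ?_, ?_⟩ <;> ext i j <;> fin_cases j
  exacts [congrFun₂ h i 0, congrFun₂ h i 1, congrFun₂ h i 2, congrFun₂ h i 3,
    congrFun₂ h i 4, congrFun₂ h i 5]

def stack3 (P Q T : Matrix (Fin 2) (Fin 6) F3) : Matrix (Fin 6) (Fin 6) F3 :=
  Matrix.of fun k => ![P, Q, T] ⟨(k : ℕ) / 2, by omega⟩ ⟨(k : ℕ) % 2, by omega⟩

lemma stack3_mul (P Q T : Matrix (Fin 2) (Fin 6) F3) (g : Matrix (Fin 6) (Fin 6) F3) :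
    stack3 P Q T * g = stack3 (P * g) (Q * g) (T * g) := by
  ext k j
  fin_cases k <;> rfl

lemma stack3_blk3 : stack3 (blk3 1 0 0) (blk3 0 1 0) (blk3 0 0 1) = 1 := by
  decide +kernel

lemma ext_of_blk3_mul {g h : Matrix (Fin 6) (Fin 6) F3} (h0 : blk3 1 0 0 * g = blk3 1 0 0 * h)
    (h1 : blk3 0 1 0 * g = blk3 0 1 0 * h) (h2 : blk3 0 0 1 * g = blk3 0 0 1 * h) : g = h := by
  rw [← Matrix.one_mul g, ← Matrix.one_mul h, ← stack3_blk3, stack3_mul, stack3_mul,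
    h0, h1, h2]

def matR : Matrix (Fin 2) (Fin 2) F3 := !![2, 0; 2, 2]

def matS : Matrix (Fin 2) (Fin 2) F3 := !![2, 2; 0, 2]

lemma exists_eq_smul_one_of_commute (A : Matrix (Fin 2) (Fin 2) F3) (hR : Commute matR A)
    (hS : Commute matS A) : ∃ a : F3, A = a • 1 :=
  ⟨A 0 0, by revert A; unfold Commute SemiconjBy; decide +kernel⟩

def frame : Fin 5 → Matrix (Fin 2) (Fin 6) F3 :=
  ![blk3 1 0 0, blk3 0 1 0, blk3 0 0 1, blk3 1 1 1, blk3 1 matR matS]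

lemma exists_eq_smul_one_of_frame_mul (g : Matrix (Fin 6) (Fin 6) F3)
    (hg : ∀ i, ∃ X : Matrix (Fin 2) (Fin 2) F3, X * frame i = frame i * g) :
    ∃ a : F3, g = a • 1 := by
  choose X hX using hg
  have h0 : blk3 1 0 0 * g = X 0 * blk3 1 0 0 := (hX 0).symm
  have h1 : blk3 0 1 0 * g = X 1 * blk3 0 1 0 := (hX 1).symm
  have h2 : blk3 0 0 1 * g = X 2 * blk3 0 0 1 := (hX 2).symm
  have hmul (A B C : Matrix (Fin 2) (Fin 2) F3) :
      blk3 A B C * g = blk3 (A * X 0) (B * X 1) (C * X 2) := by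
    rw [blk3_eq_add A, blk3_eq_add (A * X 0)]
    simp only [Matrix.add_mul, Matrix.mul_assoc, h0, h1, h2]
  have h3 : X 3 * blk3 1 1 1 = blk3 1 1 1 * g := hX 3
  have h4 : X 4 * blk3 1 matR matS = blk3 1 matR matS * g := hX 4
  simp only [mul_blk3, hmul, mul_one, one_mul] at h3 h4
  obtain ⟨h30, h31, h32⟩ := blk3_injective h3
  obtain ⟨h40, h4R, h4S⟩ := blk3_injective h4
  have hX1 : X 1 = X 0 := h31.symm.trans h30
  have hX2 : X 2 = X 0 := h32.symm.trans h30
  rw [h40, hX1] at h4R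
  rw [h40, hX2] at h4S
  obtain ⟨a, ha⟩ := exists_eq_smul_one_of_commute (X 0) h4R.symm h4S.symm
  refine ⟨a, ext_of_blk3_mul ?_ ?_ ?_⟩ <;>
    rw [Matrix.mul_smul, Matrix.mul_one]
  · rw [h0, ha, Matrix.smul_mul, Matrix.one_mul]
  · rw [h1, hX1, ha, Matrix.smul_mul, Matrix.one_mul]
  · rw [h2, hX2, ha, Matrix.smul_mul, Matrix.one_mul]

lemma lineOf_le_lineOf_iff {A B : Matrix (Fin 2) (Fin 6) F3} :
    lineOf A ≤ lineOf B ↔ ∃ X : Matrix (Fin 2) (Fin 2) F3, X * B = A :=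
  span_range_le_span_range_iff

lemma lineOf_eq_lineOf_iff {A B : Matrix (Fin 2) (Fin 6) F3} :
    lineOf A = lineOf B ↔
      (∃ X : Matrix (Fin 2) (Fin 2) F3, X * B = A) ∧
        ∃ X : Matrix (Fin 2) (Fin 2) F3, X * A = B := by
  rw [le_antisymm_iff, lineOf_le_lineOf_iff, lineOf_le_lineOf_iff]

lemma map_lineOf (A : Matrix (Fin 2) (Fin 6) F3) (g : Matrix (Fin 6) (Fin 6) F3) :
    (lineOf A).map g.vecMulLinear = lineOf (A * g) := by
  rw [lineOf, lineOf, Submodule.map_span]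
  exact congrArg _ (Set.range_comp _ _).symm

def frameLine (i : Fin 5) : Submodule F3 V6 :=
  lineOf (frame i)

lemma F5_eq_range : F5 = Set.range frameLine := by
  ext ℓ
  simp [F5, frameLine, frame, matR, matS, Fin.exists_fin_succ, eq_comm]

lemma frameLine_injective : Function.Injective frameLine := by
  have key : ∀ i j, (∃ X : Matrix (Fin 2) (Fin 2) F3, X * frame j = frame i) → i = j := by
    decide +kernel
  exact fun i j h => key i j (lineOf_le_lineOf_iff.mp h.le)

lemma card_F5 : Nat.card F5 = 5 := by
  rw [F5_eq_range, Nat.card_range_of_injective frameLine_injective, Nat.card_fin]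

instance : Finite F5 := Nat.finite_of_card_ne_zero (by rw [card_F5]; norm_num)

-- The block matrix `[[0, C(R-1), 0], [0, 0, C(S-1)], [C, C, C]]` with `C = [[1,2],[1,0]]`.
def frameRotation : GL (Fin 6) F3 :=
  Units.ofPowEqOne !![0, 0, 2, 2, 0, 0; 0, 0, 1, 0, 0, 0; 0, 0, 0, 0, 1, 1; 0, 0, 0, 0, 1, 2;
    1, 2, 1, 2, 1, 2; 1, 0, 1, 0, 1, 0] 5 (by decide +kernel) (by norm_num)

def frameSwap : GL (Fin 6) F3 :=
  Units.ofPowEqOne !![0, 0, 1, 0, 0, 0; 0, 0, 1, 2, 0, 0; 1, 0, 0, 0, 0, 0; 1, 2, 0, 0, 0, 0;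
    0, 0, 0, 0, 1, 0; 0, 0, 0, 0, 1, 2] 2 (by decide +kernel) (by norm_num)

lemma map_frameLine_frameRotation (i : Fin 5) :
    (frameLine i).map (frameRotation : Matrix (Fin 6) (Fin 6) F3).vecMulLinear =
      frameLine (finRotate 5 i) := by
  rw [frameLine, frameLine, map_lineOf, lineOf_eq_lineOf_iff]
  revert i
  decide +kernel

lemma map_frameLine_frameSwap (i : Fin 5) :
    (frameLine i).map (frameSwap : Matrix (Fin 6) (Fin 6) F3).vecMulLinear =
      frameLine (Equiv.swap 0 1 i) := by
  rw [frameLine, frameLine, map_lineOf, lineOf_eq_lineOf_iff]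
  revert i
  decide +kernel

lemma rowRealizablePerms_frameLine : rowRealizablePerms frameLine = ⊤ := by
  rw [eq_top_iff, ← Equiv.Perm.closure_prime_cycle_swap (by norm_num) isCycle_finRotate
    support_finRotate ⟨0, 1, by decide, rfl⟩, Subgroup.closure_le, Set.insert_subset_iff,
    Set.singleton_subset_iff]
  exact ⟨⟨frameRotation, map_frameLine_frameRotation⟩,
    ⟨frameSwap, map_frameLine_frameSwap⟩⟩

lemma mem_rowFixer_F5 (g : GL (Fin 6) F3) :
    g ∈ rowFixer F5 ↔
      (g : Matrix (Fin 6) (Fin 6) F3) = 1 ∨ (g : Matrix (Fin 6) (Fin 6) F3) = -1 := by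
  constructor
  · intro hg
    obtain ⟨a, ha⟩ := exists_eq_smul_one_of_frame_mul g fun i => by
      have := hg (frameLine i) (F5_eq_range ▸ Set.mem_range_self i)
      rw [frameLine, map_lineOf] at this
      exact lineOf_le_lineOf_iff.mp this.le
    have ha0 : a ≠ 0 := by
      rintro rfl
      exact g.ne_zero (by rw [ha, zero_smul])
    rcases (by decide : ∀ a : F3, a ≠ 0 → a = 1 ∨ a = -1) a ha0 with rfl | rfl
    · exact .inl (by rw [ha, one_smul])
    · exact .inr (by rw [ha, neg_smul, one_smul])
  · rintro (h | h) ℓ -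
    · rw [h, Submodule.map_vecMulLinear_one]
    · rw [h, Submodule.map_vecMulLinear_neg_one]

lemma card_rowFixer_F5 : Nat.card (rowFixer F5) = 2 := by
  have hpair : (rowFixer F5 : Set (GL (Fin 6) F3)) = {1, -1} := by
    ext g
    simp only [SetLike.mem_coe, mem_rowFixer_F5, Set.mem_insert_iff, Set.mem_singleton_iff,
      Units.ext_iff, Units.val_one, Units.val_neg]
  rw [← SetLike.coe_sort_coe, Nat.card_coe_set_eq, hpair,
    Set.ncard_pair (by rw [Ne, Units.ext_iff]; decide +kernel)]

/-- The setwise stabilizer `G` of `F5` in `GL(6,3)` (acting on row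
vectors) has order 240; the kernel of its permutation action on the five lines of `F5`
consists exactly of the scalar matrices `±1`; and every permutation of the five lines of
`F5` is induced by some element of `G`, i.e. the image of the action is the full symmetric
group on `F5` (so the projective stabilizer of `F5` is isomorphic to `S₅`). -/
theorem stmt10 :
    {g : GL (Fin 6) F3 |
      ∀ ℓ ∈ F5, ℓ.map (Matrix.vecMulLinear (g : Matrix (Fin 6) (Fin 6) F3)) ∈ F5}.ncard
      = 240 ∧
    (∀ g : GL (Fin 6) F3,
      (∀ ℓ ∈ F5, ℓ.map (Matrix.vecMulLinear (g : Matrix (Fin 6) (Fin 6) F3)) = ℓ) ↔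
      ((g : Matrix (Fin 6) (Fin 6) F3) = 1 ∨ (g : Matrix (Fin 6) (Fin 6) F3) = -1)) ∧
    (∀ σ : Equiv.Perm {x : Submodule F3 V6 // x ∈ F5},
      ∃ g : GL (Fin 6) F3, ∀ ℓ : Submodule F3 V6, ∀ h : ℓ ∈ F5,
        ℓ.map (Matrix.vecMulLinear (g : Matrix (Fin 6) (Fin 6) F3))
          = ((σ ⟨ℓ, h⟩ : {x : Submodule F3 V6 // x ∈ F5}) : Submodule F3 V6)) := by
  have hperm := exists_map_eq_of_rowRealizablePerms_eq_top frameLine_injective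
    rowRealizablePerms_frameLine F5_eq_range
  refine ⟨?_, mem_rowFixer_F5, fun σ => ?_⟩
  · rw [← Nat.card_coe_set_eq]
    change Nat.card (rowStabilizer F5) = 240
    rw [card_rowStabilizer hperm, card_rowFixer_F5, card_F5]
    rfl
  · obtain ⟨g, hg⟩ := hperm σ
    exact ⟨g, fun ℓ h => hg ⟨ℓ, h⟩⟩
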